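/- Suppose r(v) = r̄ for all v ∈ {1,…,V}, where r̄ > 0. Fix b ∈ {1,…,B}. If h(b) + min_{s ∈ S} (c(s) − s·r̄) ≥ 0, then the map v ↦ μ(b,v) is non-decreasing on {1,…,V}. -/

import Mathlib

/-- `delta S hS c h r b v` is δ(b,v): δ(b,0) = 0 and
δ(b,v) = h(b) + min_{s ∈ S} (c(s) − s·(r(v) + Σ_{i=0}^{v−1} δ(b,i))). -/
noncomputable def delta (S : Finset ℝ) (hS : S.Nonempty) (c : ℝ → ℝ) (h r : ℕ → ℝ)
    (b : ℕ) : ℕ → ℝ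
  | 0 => 0
  | v + 1 => h b + S.inf' hS (fun s =>
      c s - s * (r (v + 1) + ∑ i ∈ (Finset.range (v + 1)).attach, delta S hS c h r b i.1))
decreasing_by exact Finset.mem_range.mp i.2

/-- `sigma S hS c h r b v` is σ(b,v) = Σ_{i=0}^{v} δ(b,i). -/
noncomputable def sigma (S : Finset ℝ) (hS : S.Nonempty) (c : ℝ → ℝ) (h r : ℕ → ℝ)
    (b v : ℕ) : ℝ :=
  ∑ i ∈ Finset.range (v + 1), delta S hS c h r b i

open Classical

/-- `gmin S hS c x` = the least element of the set of minimizers over s ∈ S of c(s) − s·x. -/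
noncomputable def gmin (S : Finset ℝ) (hS : S.Nonempty) (c : ℝ → ℝ) (x : ℝ) : ℝ :=
  (S.filter (fun s => ∀ s' ∈ S, c s - s * x ≤ c s' - s' * x)).min'
    (by
      obtain ⟨s, hs, hmin⟩ := S.exists_min_image (fun s => c s - s * x) hS
      exact ⟨s, Finset.mem_filter.mpr ⟨hs, fun s' hs' => hmin s' hs'⟩⟩)

/-- μ(b,v) = g(r(v) + σ(b,v−1)). -/
noncomputable def mu (S : Finset ℝ) (hS : S.Nonempty) (c : ℝ → ℝ) (h r : ℕ → ℝ)
    (b v : ℕ) : ℝ :=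
  gmin S hS c (r v + sigma S hS c h r b (v - 1))

/-!
Write `f x = h b + min_{s ∈ S} (c s - s x)`, so that `δ(b, v + 1) = f (r (v + 1) + σ(b, v))`.
Since every `s ∈ S` is at most `1`, raising `x` by `t ≥ 0` lowers `f x` by at most `t`.
With `r = r̄` constant, passing from `δ(b, v + 1)` to `δ(b, v + 2)` raises the argument of `f`
by exactly `δ(b, v + 1)`, so `δ(b, v + 1) ≥ 0` gives `δ(b, v + 2) ≥ 0`; the base case is
the hypothesis `f r̄ ≥ 0`. Hence `σ(b, ·)` is nondecreasing on `{0, …, V}`, and `μ` inherits this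
because the least minimizer of `c s - s x` is nondecreasing in `x`.
-/

section Minimizer

variable (S : Finset ℝ) (hS : S.Nonempty) (c : ℝ → ℝ)

lemma gmin_spec (x : ℝ) :
    gmin S hS c x ∈ S ∧ ∀ s ∈ S, c (gmin S hS c x) - gmin S hS c x * x ≤ c s - s * x :=
  Finset.mem_filter.mp (Finset.min'_mem _ _)

lemma le_of_sub_mul_le_of_sub_mul_le {x y s t : ℝ} (hxy : x < y)
    (hs : c s - s * x ≤ c t - t * x) (ht : c t - t * y ≤ c s - s * y) : s ≤ t := by
  by_contra! hts
  nlinarith [mul_pos (sub_pos.mpr hts) (sub_pos.mpr hxy)]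

lemma gmin_mono : Monotone (gmin S hS c) := by
  intro x y hxy
  rcases hxy.eq_or_lt with rfl | hlt
  · rfl
  · exact le_of_sub_mul_le_of_sub_mul_le c hlt
      ((gmin_spec S hS c x).2 _ (gmin_spec S hS c y).1)
      ((gmin_spec S hS c y).2 _ (gmin_spec S hS c x).1)

lemma inf'_sub_mul_sub_le (hS1 : ∀ s ∈ S, s ≤ 1) {t : ℝ} (ht : 0 ≤ t) (x : ℝ) :
    S.inf' hS (fun s => c s - s * x) - t ≤ S.inf' hS (fun s => c s - s * (x + t)) :=
  Finset.le_inf' _ _ fun s hs => by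
    have := Finset.inf'_le (fun s => c s - s * x) hs
    nlinarith [mul_nonneg (sub_nonneg.mpr (hS1 s hs)) ht]

end Minimizer

section Recursion

variable {S : Finset ℝ} {hS : S.Nonempty} {c : ℝ → ℝ} {h r : ℕ → ℝ} {b : ℕ}

lemma delta_succ (v : ℕ) :
    delta S hS c h r b (v + 1)
      = h b + S.inf' hS (fun s => c s - s * (r (v + 1) + sigma S hS c h r b v)) := by
  rw [delta]
  simp [sigma, Finset.sum_attach]

lemma sigma_zero : sigma S hS c h r b 0 = 0 := by
  simp [sigma, delta]

lemma sigma_succ (v : ℕ) :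
    sigma S hS c h r b (v + 1) = sigma S hS c h r b v + delta S hS c h r b (v + 1) :=
  Finset.sum_range_succ _ _

lemma delta_nonneg (hS1 : ∀ s ∈ S, s ≤ 1) {V : ℕ} {rbar : ℝ}
    (hrconst : ∀ v, 1 ≤ v → v ≤ V → r v = rbar)
    (hpos : 0 ≤ h b + S.inf' hS (fun s => c s - s * rbar)) :
    ∀ v ≤ V, 0 ≤ delta S hS c h r b v := by
  suffices h_succ : ∀ v, v + 1 ≤ V → 0 ≤ delta S hS c h r b (v + 1) by
    rintro (_ | v) hv
    · simp [delta]
    · exact h_succ v hv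
  intro v
  induction v with
  | zero =>
    intro hV
    rwa [delta_succ, sigma_zero, add_zero, hrconst 1 le_rfl hV]
  | succ v ih =>
    intro hv
    have hprev := ih (by omega)
    have hprev_eq : delta S hS c h r b (v + 1)
        = h b + S.inf' hS (fun s => c s - s * (rbar + sigma S hS c h r b v)) := by
      rw [delta_succ, hrconst (v + 1) (by omega) (by omega)]
    have hlip := inf'_sub_mul_sub_le S hS c hS1 hprev (rbar + sigma S hS c h r b v)
    rw [delta_succ, sigma_succ, hrconst (v + 2) (by omega) hv, ← add_assoc]
    linarith

lemma sigma_le_sigma {n v w : ℕ} (hδ : ∀ i ≤ n, 0 ≤ delta S hS c h r b i)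
    (hvw : v ≤ w) (hw : w ≤ n) : sigma S hS c h r b v ≤ sigma S hS c h r b w :=
  Finset.sum_le_sum_of_subset_of_nonneg (Finset.range_subset_range.mpr (by omega))
    fun i hi _ => hδ i (by rw [Finset.mem_range] at hi; omega)

end Recursion

theorem stmt14_general
    (S : Finset ℝ) (hS : S.Nonempty) (hS01 : ∀ s ∈ S, s ∈ Set.Icc (0 : ℝ) 1)
    (c : ℝ → ℝ)
    (h : ℕ → ℝ)
    (r : ℕ → ℝ)
    (V : ℕ)
    (rbar : ℝ) (hrconst : ∀ v, 1 ≤ v → v ≤ V → r v = rbar)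
    (b : ℕ)
    (hpos : 0 ≤ h b + S.inf' hS (fun s => c s - s * rbar)) :
    ∀ v v', 1 ≤ v → v ≤ v' → v' ≤ V →
      mu S hS c h r b v ≤ mu S hS c h r b v' := by
  intro v v' hv hvv' hv'V
  have hδ := delta_nonneg (fun s hs => (hS01 s hs).2) hrconst hpos
  unfold mu
  rw [hrconst v hv (hvv'.trans hv'V), hrconst v' (hv.trans hvv') hv'V]
  have hσ : sigma S hS c h r b (v - 1) ≤ sigma S hS c h r b (v' - 1) :=
    sigma_le_sigma hδ (by omega) (by omega)
  exact gmin_mono S hS c (add_le_add le_rfl hσ)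

/-- Constant reward r(v) = r̄ on {1,…,V}. If h(b) + min_{s∈S}(c(s) − s·r̄) ≥ 0,
then v ↦ μ(b,v) is non-decreasing on {1,…,V}. -/
theorem stmt14
    (S : Finset ℝ) (hS : S.Nonempty) (hS01 : ∀ s ∈ S, s ∈ Set.Icc (0 : ℝ) 1)
    (c : ℝ → ℝ) (hc0 : ∀ s ∈ S, 0 ≤ c s)
    (hcmono : ∀ s ∈ S, ∀ s' ∈ S, s ≤ s' → c s ≤ c s')
    (h : ℕ → ℝ) (hh0 : ∀ b, 0 ≤ h b) (hhmono : Monotone h)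
    (r : ℕ → ℝ) (hrmono : Monotone r) (hr0 : r 0 = 0) (hrpos : ∀ v, 1 ≤ v → 0 < r v)
    (B V : ℕ) (hB : 0 < B) (hV : 0 < V)
    (rbar : ℝ) (hrbar : 0 < rbar) (hrconst : ∀ v, 1 ≤ v → v ≤ V → r v = rbar)
    (b : ℕ) (hb1 : 1 ≤ b) (hbB : b ≤ B)
    (hpos : 0 ≤ h b + S.inf' hS (fun s => c s - s * rbar)) :
    ∀ v v', 1 ≤ v → v ≤ v' → v' ≤ V →
      mu S hS c h r b v ≤ mu S hS c h r b v' :=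
  stmt14_general S hS hS01 c h r V rbar hrconst b hpos
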